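/- Let n ≥ 12 and suppose there exist k ≥ 2 distinct integers 1 < d₁ < d₂ < ... < d_k whose sum is at most n. Let λ be a partition of n with λ₁ ≥ λ₁' ≥ 2, and let μ be the partition of m := n - d₁ obtained from λ by removing the first corner d₁ times successively. If n - λ₁ < k, then λ₁ - λ₂ ≥ d₁ and m - μ₁ = n - λ₁. -/

import Mathlib

/-- `l` is a partition of `n`: a weakly decreasing list of positive integers with sum `n`. -/
def IsPartitionOf (n : ℕ) (l : List ℕ) : Prop :=
  l.Pairwise (· ≥ ·) ∧ (∀ x ∈ l, 0 < x) ∧ l.sum = n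

/-- Remove the corner box lying at the end of the last row whose length is at least `b`
(used with `b` a part of `l`: this removes a box from the last row of length `b`). -/
def removeCornerAt (l : List ℕ) (b : ℕ) : List ℕ :=
  (l.set (l.countP (fun x => decide (b ≤ x)) - 1) (b - 1)).filter (fun x => decide (0 < x))

/-- Remove the first corner: the corner lying in a longest row. -/
def removeFirstCorner (l : List ℕ) : List ℕ := removeCornerAt l (l.headD 0)

/-- The second largest distinct part of `l`. -/
def secondVal (l : List ℕ) : ℕ := (l.filter (fun x => decide (x < l.headD 0))).headD 0

/-- Remove the second corner: the corner lying in a row whose length is the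
second largest among the row lengths. -/
def removeSecondCorner (l : List ℕ) : List ℕ := removeCornerAt l (secondVal l)

/-- The conjugate (transpose) partition. -/
def conjugatePartition (l : List ℕ) : List ℕ :=
  (List.range (l.headD 0)).map (fun j => l.countP (fun x => decide (j < x)))

/-- Value of the permutation character of `S_n` acting on colorings of `Fin n`
with fiber sizes given by the composition `mu` (the character induced from the
trivial character of the Young subgroup `S_{mu}`). -/
noncomputable def youngPermChar {n : ℕ} (mu : List ℕ) (σ : Equiv.Perm (Fin n)) : ℤ :=
  (Set.ncard {f : Fin n → ℕ |
    (∀ i, f (σ i) = f i) ∧ ∀ j : ℕ, Set.ncard {i : Fin n | f i = j} = mu.getD j 0} : ℤ)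

/-- The irreducible character `χ^λ` of `S_n` associated with the partition `lam`,
defined by the Jacobi–Trudi determinant `χ^λ = det(h_{λ_i - i + j})`, expanded
as a signed sum over permutations of Young-subgroup permutation characters. -/
noncomputable def chiLambda {n : ℕ} (lam : List ℕ) (σ : Equiv.Perm (Fin n)) : ℤ :=
  ∑ w : Equiv.Perm (Fin lam.length),
    if ∀ i : Fin lam.length, (i : ℕ) ≤ lam.getD i 0 + (w i : ℕ) then
      ((Equiv.Perm.sign w : ℤ)) *
        youngPermChar ((List.finRange lam.length).map
          (fun (i : Fin lam.length) => lam.getD (i : ℕ) 0 + ((w i : ℕ)) - (i : ℕ))) σ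
    else 0

/-- The cycle type of a permutation including fixed points as cycles of length 1. -/
def fullCycleType {n : ℕ} (σ : Equiv.Perm (Fin n)) : Multiset ℕ :=
  σ.cycleType + Multiset.replicate (n - σ.support.card) 1

/-!
If some row other than the first had length at least `λ₁ - d₁`, then `n < λ₁ + k` would force
`n ≤ 2k + d₁ - 2`, whereas `n ≥ ∑ dᵢ > k d₁`; since `k, d₁ ≥ 2` these are incompatible.
So every other row is strictly shorter than `λ₁ - d₁`: the first row stays the unique longest
one during all `d₁` removals, which just shorten it to `λ₁ - d₁`.
-/

lemma StrictMono.card_mul_apply_zero_lt_sum {k : ℕ} {d : Fin k → ℕ} (hd : StrictMono d)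
    (hk : 1 < k) : k * d ⟨0, by omega⟩ < ∑ i, d i := by
  calc k * d ⟨0, by omega⟩ = ∑ _i : Fin k, d ⟨0, by omega⟩ := by simp
    _ < ∑ i, d i :=
      Finset.sum_lt_sum (fun i _ => hd.monotone (Fin.le_def.mpr i.val.zero_le))
        ⟨⟨1, hk⟩, Finset.mem_univ _, hd (by simp [Fin.lt_def])⟩

lemma add_lt_of_mul_lt_of_lt_add {n k a l x : ℕ} (hk : 2 ≤ k) (ha : 2 ≤ a) (hka : k * a < n)
    (hn : n < l + k) (hx : l + x ≤ n) : x + a < l := by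
  nlinarith [Nat.mul_le_mul (Nat.sub_le_sub_right hk 2) (Nat.sub_le_sub_right ha 2)]

lemma removeFirstCorner_cons {h : ℕ} {t : List ℕ} (hh : 2 ≤ h) (hpos : ∀ x ∈ t, 0 < x)
    (hlt : ∀ x ∈ t, x < h) : removeFirstCorner (h :: t) = (h - 1) :: t := by
  have hcount : (h :: t).countP (fun x => decide (h ≤ x)) = 1 := by
    rw [List.countP_cons, List.countP_eq_zero.mpr (fun x hx => by simpa using hlt x hx)]
    simp
  rw [removeFirstCorner, removeCornerAt, List.headD_cons, hcount, Nat.sub_self,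
    List.set_cons_zero, List.filter_cons_of_pos (by simp; omega),
    List.filter_eq_self.mpr (fun x hx => by simpa using hpos x hx)]

lemma removeFirstCorner_iterate_cons {j h : ℕ} {t : List ℕ} (hj : j < h)
    (hpos : ∀ x ∈ t, 0 < x) (hle : ∀ x ∈ t, x + j ≤ h) :
    removeFirstCorner^[j] (h :: t) = (h - j) :: t := by
  induction j generalizing h with
  | zero => rfl
  | succ j ih =>
    rw [Function.iterate_succ_apply,
      removeFirstCorner_cons (by omega) hpos (fun x hx => by have := hle x hx; omega),
      ih (by omega) (fun x hx => by have := hle x hx; omega), Nat.sub_sub, Nat.add_comm 1]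

theorem stmt2 (n k : ℕ) (hk : 2 ≤ k)
    (d : Fin k → ℕ) (hdmono : StrictMono d) (hdgt : ∀ i, 1 < d i)
    (hsum : ∑ i, d i ≤ n)
    (lam : List ℕ) (hlam : IsPartitionOf n lam)
    (μ : List ℕ) (hμ : μ = removeFirstCorner^[d ⟨0, by omega⟩] lam)
    (ht : (n : ℤ) - lam.headD 0 < k) :
    (d ⟨0, by omega⟩ : ℤ) ≤ (lam.headD 0 : ℤ) - lam.getD 1 0 ∧
    ((n : ℤ) - d ⟨0, by omega⟩) - μ.headD 0 = (n : ℤ) - lam.headD 0 := by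
  obtain ⟨-, hpos, hlsum⟩ := hlam
  set a := d ⟨0, by omega⟩
  have hka : k * a < n := (hdmono.card_mul_apply_zero_lt_sum hk).trans_le hsum
  obtain ⟨l, t, rfl⟩ : ∃ l t, lam = l :: t :=
    List.exists_cons_of_ne_nil (by rintro rfl; simp at hlsum; omega)
  simp only [List.headD_cons, List.sum_cons] at ht hlsum ⊢
  have hgap : ∀ x, l + x ≤ n → x + a < l :=
    fun x => add_lt_of_mul_lt_of_lt_add hk (hdgt _) hka (by omega)
  have htail : ∀ x ∈ t, l + x ≤ n := fun x hx => by
    have := List.le_sum_of_mem hx; omega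
  have hsecond : (l :: t).getD 1 0 + a < l := by
    cases t with
    | nil => exact hgap 0 (by omega)
    | cons y t => exact hgap y (htail y List.mem_cons_self)
  have hμ' : μ = (l - a) :: t := hμ ▸ removeFirstCorner_iterate_cons
    (by simpa using hgap 0 (by omega))
    (fun x hx => hpos x (List.mem_cons_of_mem _ hx)) (fun x hx => (hgap x (htail x hx)).le)
  subst hμ'
  simp only [List.headD_cons]
  omega
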